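/- Key pointwise inequality for quantized consensus: let L be the Laplacian of a weakly connected weight-balanced graph on N nodes, y ∈ ℝ^N with 𝟙ᵀy = 0, x ∈ ℝ^N with y = x − (𝟙𝟙ᵀ/N)x, and v ∈ ℝ^N with ‖v − x‖ ≤ √N·Δ/2. Then −yᵀLv ≤ −λ₂(Sym(L))‖y‖(‖y‖ − (‖L‖/λ₂(Sym(L)))·(Δ/2)·√N). -/

import Mathlib

/-!
Write `v = y + c𝟙 + (v - x)`. The Laplacian kills constants, so `yᵀLv = yᵀLy + yᵀL(v - x)`.
Since `yᵀLy = yᵀ Sym(L) y` and, for a balanced graph, this is `½ Σ aᵢⱼ (yᵢ - yⱼ)²`, connectivity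
forces `ker Sym(L) = span 𝟙 ⊥ y`; expanding `y` in an eigenbasis of `Sym(L)` then gives
`yᵀLy ≥ λ₂‖y‖²`. The remaining term is at most `‖y‖ ‖L‖ ‖v - x‖` by Cauchy–Schwarz.
-/

open Matrix

noncomputable def en {N : ℕ} (v : Fin N → ℝ) : ℝ := Real.sqrt (∑ i, v i ^ 2)

section EuclideanNorm

variable {N : ℕ}

theorem en_nonneg (v : Fin N → ℝ) : 0 ≤ en v := Real.sqrt_nonneg _

theorem en_sq (v : Fin N → ℝ) : en v ^ 2 = v ⬝ᵥ v := by
  rw [en, Real.sq_sqrt (by positivity)]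
  simp [dotProduct, sq]

theorem neg_dotProduct_le_en_mul_en (a b : Fin N → ℝ) : -(a ⬝ᵥ b) ≤ en a * en b := by
  rw [← neg_dotProduct]
  simpa [en, dotProduct] using Real.sum_mul_le_sqrt_mul_sqrt Finset.univ (-a) b

end EuclideanNorm

open Module.End InnerProductSpace in
theorem LinearMap.IsSymmetric.mul_norm_sq_le_inner_map_self {E : Type*} [NormedAddCommGroup E]
    [InnerProductSpace ℝ E] [FiniteDimensional ℝ E] {T : E →ₗ[ℝ] E} (hT : T.IsSymmetric)
    {c : ℝ} (hc : ∀ μ : ℝ, μ ≠ 0 → HasEigenvalue T μ → c ≤ μ) {y : E}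
    (hy : y ∈ (LinearMap.ker T)ᗮ) :
    c * ‖y‖ ^ 2 ≤ ⟪y, T y⟫_ℝ := by
  set b := hT.eigenvectorBasis rfl
  set μ := hT.eigenvalues rfl
  -- `y` has no component along eigenvectors of the eigenvalue `0`, since these lie in `ker T`.
  have hcoord : ∀ i, c * b.repr y i ^ 2 ≤ μ i * b.repr y i ^ 2 := by
    intro i
    by_cases hμ : μ i = 0
    · have hker : b i ∈ LinearMap.ker T := by
        simp [b, hT.apply_eigenvectorBasis, show hT.eigenvalues rfl i = 0 from hμ]
      rw [b.repr_apply_apply, Submodule.inner_right_of_mem_orthogonal hker hy]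
      simp
    · exact mul_le_mul_of_nonneg_right (hc _ hμ (hT.hasEigenvalue_eigenvalues rfl i)) (sq_nonneg _)
  calc c * ‖y‖ ^ 2 = ∑ i, c * b.repr y i ^ 2 := by
        rw [← b.repr.norm_map, EuclideanSpace.norm_sq_eq, Finset.mul_sum]; simp
    _ ≤ ∑ i, μ i * b.repr y i ^ 2 := Finset.sum_le_sum fun i _ => hcoord i
    _ = ⟪y, T y⟫_ℝ := by
        rw [← b.repr.inner_map_map, EuclideanSpace.inner_eq_star_dotProduct]
        simp only [dotProduct, b, μ, hT.eigenvectorBasis_apply_self_apply]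
        simp [sq, mul_assoc]

namespace Matrix

variable {n : Type*}

noncomputable def symPart (L : Matrix n n ℝ) : Matrix n n ℝ := (1 / 2 : ℝ) • (L + Lᵀ)

theorem isHermitian_symPart (L : Matrix n n ℝ) : (symPart L).IsHermitian :=
  isHermitian_iff_isSymm.mpr ((isSymm_add_transpose_self L).smul _)

variable [Fintype n]

theorem dotProduct_symPart_mulVec_self (L : Matrix n n ℝ) (w : n → ℝ) :
    w ⬝ᵥ symPart L *ᵥ w = w ⬝ᵥ L *ᵥ w := by
  have htranspose : w ⬝ᵥ Lᵀ *ᵥ w = w ⬝ᵥ L *ᵥ w := by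
    rw [dotProduct_mulVec, vecMul_transpose, dotProduct_comm]
  rw [symPart, smul_mulVec, add_mulVec, dotProduct_smul, dotProduct_add, htranspose, smul_eq_mul]
  ring

variable [DecidableEq n]

theorem IsHermitian.mul_dotProduct_self_le_dotProduct_mulVec {S : Matrix n n ℝ}
    (hS : S.IsHermitian) {c : ℝ}
    (hc : c ∈ lowerBounds {μ : ℝ | μ ≠ 0 ∧ ∃ v : n → ℝ, v ≠ 0 ∧ S *ᵥ v = μ • v})
    {y : n → ℝ} (hy : ∀ w, S *ᵥ w = 0 → w ⬝ᵥ y = 0) :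
    c * (y ⬝ᵥ y) ≤ y ⬝ᵥ S *ᵥ y := by
  have hT : (toEuclideanLin S).IsSymmetric := isSymmetric_toEuclideanLin_iff.mpr hS
  have key := hT.mul_norm_sq_le_inner_map_self (c := c) (y := WithLp.toLp 2 y) ?_ ?_
  · have hnorm : ‖WithLp.toLp 2 y‖ ^ 2 = y ⬝ᵥ y := by
      rw [← real_inner_self_eq_norm_sq, EuclideanSpace.inner_eq_star_dotProduct]; simp
    simpa [hnorm, EuclideanSpace.inner_eq_star_dotProduct, toLpLin_toLp, dotProduct_comm] using key
  · intro μ hμ hμT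
    obtain ⟨v, hv, hv0⟩ := hμT.exists_hasEigenvector
    exact hc ⟨hμ, WithLp.ofLp v, by simpa using hv0,
      congrArg WithLp.ofLp (Module.End.mem_eigenspace_iff.mp hv)⟩
  · intro w hw
    rw [EuclideanSpace.inner_eq_star_dotProduct, dotProduct_comm]
    simpa using hy _ (congrArg WithLp.ofLp hw)

noncomputable def laplacian (A : Matrix n n ℝ) : Matrix n n ℝ :=
  diagonal (fun i => ∑ j, A i j) - A

variable {A : Matrix n n ℝ}

theorem laplacian_mulVec_const (c : ℝ) : laplacian A *ᵥ (fun _ => c) = 0 := by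
  ext i
  rw [laplacian, sub_mulVec, Pi.sub_apply, mulVec_diagonal]
  simp [mulVec, dotProduct, Finset.sum_mul]

theorem dotProduct_laplacian_mulVec_self (hbal : ∀ i, ∑ j, A i j = ∑ j, A j i) (w : n → ℝ) :
    w ⬝ᵥ laplacian A *ᵥ w = (∑ i, ∑ j, A i j * (w i - w j) ^ 2) / 2 := by
  have hcol : ∑ i, ∑ j, A i j * w j ^ 2 = ∑ i, ∑ j, A i j * w i ^ 2 := by
    rw [Finset.sum_comm]
    simp_rw [← Finset.sum_mul, hbal]
  have hexpand : w ⬝ᵥ laplacian A *ᵥ w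
      = ∑ i, ∑ j, A i j * w i ^ 2 - ∑ i, ∑ j, A i j * w i * w j := by
    rw [laplacian, sub_mulVec, dotProduct_sub, funext (mulVec_diagonal _ w)]
    simp only [dotProduct, mulVec, Finset.mul_sum, Finset.sum_mul]
    congr 1 <;> exact Finset.sum_congr rfl fun i _ => Finset.sum_congr rfl fun j _ => by ring
  have hsq : ∀ i j, A i j * (w i - w j) ^ 2
      = A i j * w i ^ 2 + A i j * w j ^ 2 - 2 * (A i j * w i * w j) := fun i j => by ring
  simp only [hexpand, hsq, Finset.sum_sub_distrib, Finset.sum_add_distrib, ← Finset.mul_sum, hcol]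
  ring

theorem eq_of_dotProduct_laplacian_mulVec_self_eq_zero (hA : ∀ i j, 0 ≤ A i j)
    (hbal : ∀ i, ∑ j, A i j = ∑ j, A j i)
    (hconn : ∀ i j, Relation.ReflTransGen (fun a b => A a b ≠ 0 ∨ A b a ≠ 0) i j)
    {w : n → ℝ} (hw : w ⬝ᵥ laplacian A *ᵥ w = 0) (i j : n) : w i = w j := by
  have hnonneg : ∀ a b, 0 ≤ A a b * (w a - w b) ^ 2 := fun a b => by
    have := hA a b; positivity
  have hterm : ∀ a b, A a b * (w a - w b) ^ 2 = 0 := by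
    rw [dotProduct_laplacian_mulVec_self hbal, div_eq_zero_iff, or_iff_left two_ne_zero,
      Finset.sum_eq_zero_iff_of_nonneg fun a _ => Finset.sum_nonneg fun b _ => hnonneg a b] at hw
    intro a b
    exact (Finset.sum_eq_zero_iff_of_nonneg fun b _ => hnonneg a b).mp
      (hw a (Finset.mem_univ a)) b (Finset.mem_univ b)
  have hedge : ∀ a b, A a b ≠ 0 → w a = w b := fun a b hab => by
    have := (mul_eq_zero.mp (hterm a b)).resolve_left hab
    rwa [sq_eq_zero_iff, sub_eq_zero] at this
  induction hconn i j with
  | refl => rfl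
  | tail _ hbc ih => exact ih.trans (hbc.elim (hedge _ _) fun h => (hedge _ _ h).symm)

theorem dotProduct_eq_zero_of_symPart_laplacian_mulVec_eq_zero (hA : ∀ i j, 0 ≤ A i j)
    (hbal : ∀ i, ∑ j, A i j = ∑ j, A j i)
    (hconn : ∀ i j, Relation.ReflTransGen (fun a b => A a b ≠ 0 ∨ A b a ≠ 0) i j)
    {w y : n → ℝ} (hw : symPart (laplacian A) *ᵥ w = 0) (hy : ∑ i, y i = 0) : w ⬝ᵥ y = 0 := by
  have hconst := eq_of_dotProduct_laplacian_mulVec_self_eq_zero hA hbal hconn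
    (by rw [← dotProduct_symPart_mulVec_self, hw, dotProduct_zero])
  rcases isEmpty_or_nonempty n with hn | ⟨⟨i₀⟩⟩
  · simp [dotProduct]
  · calc w ⬝ᵥ y = ∑ i, w i₀ * y i := Finset.sum_congr rfl fun i _ => by rw [hconst i i₀]
      _ = 0 := by rw [← Finset.mul_sum, hy, mul_zero]

end Matrix

theorem key_pointwise_inequality_general (N : ℕ) (Δ : ℝ)
    (A : Matrix (Fin N) (Fin N) ℝ)
    (hA : ∀ i j, 0 ≤ A i j)
    (hbal : ∀ i, ∑ j, A i j = ∑ j, A j i)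
    (hconn : ∀ i j : Fin N,
      Relation.ReflTransGen (fun a b => A a b ≠ 0 ∨ A b a ≠ 0) i j)
    (L : Matrix (Fin N) (Fin N) ℝ)
    (hL : L = (Matrix.diagonal fun i => ∑ j, A i j) - A)
    (S : Matrix (Fin N) (Fin N) ℝ) (hS : S = (1 / 2 : ℝ) • (L + Lᵀ))
    (lam2 : ℝ)
    (hlam : IsLeast {μ : ℝ | μ ≠ 0 ∧ ∃ v : Fin N → ℝ, v ≠ 0 ∧ S.mulVec v = μ • v} lam2)
    (CL : ℝ)
    (hCL : IsLeast {c : ℝ | 0 ≤ c ∧ ∀ v : Fin N → ℝ, en (L.mulVec v) ≤ c * en v} CL)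
    (x y v : Fin N → ℝ)
    (hy : y = fun i => x i - (∑ j, x j) / N)
    (hy1 : ∑ i, y i = 0)
    (hv : en (fun i => v i - x i) ≤ Real.sqrt N * Δ / 2) :
    -(y ⬝ᵥ L.mulVec v)
      ≤ -(lam2 * en y * (en y - CL / lam2 * (Δ / 2) * Real.sqrt N)) := by
  obtain rfl : L = laplacian A := hL
  obtain rfl : S = symPart (laplacian A) := hS
  have hsplit : laplacian A *ᵥ v = laplacian A *ᵥ y + laplacian A *ᵥ (fun i => v i - x i) := by
    have hv_eq : v = y + (fun _ => (∑ j, x j) / N) + fun i => v i - x i := by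
      subst hy; ext i; simp
    conv_lhs => rw [hv_eq]
    rw [mulVec_add, mulVec_add, laplacian_mulVec_const, add_zero]
  have hcoercive : lam2 * en y ^ 2 ≤ y ⬝ᵥ laplacian A *ᵥ y := by
    rw [en_sq, ← dotProduct_symPart_mulVec_self]
    exact (isHermitian_symPart _).mul_dotProduct_self_le_dotProduct_mulVec hlam.2
      fun w hw => dotProduct_eq_zero_of_symPart_laplacian_mulVec_eq_zero hA hbal hconn hw hy1
  have hperturb : -(y ⬝ᵥ laplacian A *ᵥ (fun i => v i - x i)) ≤ en y * (CL * (√N * Δ / 2)) :=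
    (neg_dotProduct_le_en_mul_en _ _).trans <| mul_le_mul_of_nonneg_left
      ((hCL.1.2 _).trans (mul_le_mul_of_nonneg_left hv hCL.1.1)) (en_nonneg y)
  have hrhs : lam2 * en y * (en y - CL / lam2 * (Δ / 2) * √N)
      = lam2 * en y ^ 2 - en y * (CL * (√N * Δ / 2)) := by
    field_simp [hlam.1.1]
  rw [hsplit, dotProduct_add, hrhs]
  linarith

/-- key pointwise inequality for quantized consensus.  For the
Laplacian `L` of a weakly connected, weight-balanced graph, `y = x − (𝟙𝟙ᵀ/N)x`
(so `𝟙ᵀy = 0`) and `v` with `‖v − x‖ ≤ √N·Δ/2`, one has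
`−yᵀLv ≤ −λ₂(Sym L)‖y‖(‖y‖ − (‖L‖/λ₂(Sym L))·(Δ/2)·√N)`. -/
theorem key_pointwise_inequality (N : ℕ) (Δ : ℝ) (hΔ : 0 < Δ)
    (A : Matrix (Fin N) (Fin N) ℝ)
    (hA : ∀ i j, 0 ≤ A i j) (hdiag : ∀ i, A i i = 0)
    (hbal : ∀ i, ∑ j, A i j = ∑ j, A j i)
    (hconn : ∀ i j : Fin N,
      Relation.ReflTransGen (fun a b => A a b ≠ 0 ∨ A b a ≠ 0) i j)
    (L : Matrix (Fin N) (Fin N) ℝ)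
    (hL : L = (Matrix.diagonal fun i => ∑ j, A i j) - A)
    (S : Matrix (Fin N) (Fin N) ℝ) (hS : S = (1 / 2 : ℝ) • (L + Lᵀ))
    (lam2 : ℝ)
    (hlam : IsLeast {μ : ℝ | μ ≠ 0 ∧ ∃ v : Fin N → ℝ, v ≠ 0 ∧ S.mulVec v = μ • v} lam2)
    (CL : ℝ)
    (hCL : IsLeast {c : ℝ | 0 ≤ c ∧ ∀ v : Fin N → ℝ, en (L.mulVec v) ≤ c * en v} CL)
    (x y v : Fin N → ℝ)
    (hy : y = fun i => x i - (∑ j, x j) / N)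
    (hy1 : ∑ i, y i = 0)
    (hv : en (fun i => v i - x i) ≤ Real.sqrt N * Δ / 2) :
    -(y ⬝ᵥ L.mulVec v)
      ≤ -(lam2 * en y * (en y - CL / lam2 * (Δ / 2) * Real.sqrt N)) :=
  key_pointwise_inequality_general N Δ A hA hbal hconn L hL S hS lam2 hlam CL hCL x y v hy hy1 hv
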